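/- arXiv:1407.1641 — 3 statements merged into one kernel-verified Lean document; each statement's English description precedes it below -/
import Mathlib

section
/- Let p be a monic complex polynomial of degree M with pairwise distinct roots a_1,…,a_M. Then p'''(a_k) = 3·p'(a_k)·(L_1² − L_2), where L_m = ∑_{j≠k} 1/(a_k − a_j)^m. -/
/-!
Write `p = (X - a_k) Q` with `Q = ∏_{j ≠ k} (X - a_j)`. By Leibniz, `p'(a_k) = Q(a_k)` and
`p'''(a_k) = 3 Q''(a_k)`. Since `a_k` is not a root of `Q`, the logarithmic derivative gives
`Q'/Q = ∑ 1/(X - a_j)` and differentiating once more `Q''/Q = (Q'/Q)² + (Q'/Q)' = L₁² - L₂`.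
-/

open Polynomial Finset

namespace Polynomial

theorem iteratedDeriv_eval {𝕜 : Type*} [NontriviallyNormedField 𝕜] (P : 𝕜[X])
    (n : ℕ) : iteratedDeriv n (fun x => P.eval x) = fun x => (derivative^[n] P).eval x := by
  induction n with
  | zero => simp
  | succ n ih =>
    rw [iteratedDeriv_succ, ih, Function.iterate_succ_apply']
    funext x
    exact Polynomial.deriv _

variable {R : Type*} [CommRing R]

theorem iterate_derivative_X_sub_C_mul (c : R) (Q : R[X]) (n : ℕ) :
    derivative^[n + 1] ((X - C c) * Q) =
      (X - C c) * derivative^[n + 1] Q + (n + 1 : R[X]) * derivative^[n] Q := by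
  induction n with
  | zero => simp [derivative_mul, add_comm]
  | succ n ih =>
    rw [Function.iterate_succ_apply', ih, Function.iterate_succ_apply' _ (n + 1),
      Function.iterate_succ_apply' _ n]
    simp only [derivative_add, derivative_mul, derivative_sub, derivative_X, derivative_C,
      derivative_natCast, derivative_one]
    push_cast
    ring

theorem eval_iterate_derivative_X_sub_C_mul_self (c : R) (Q : R[X]) (n : ℕ) :
    (derivative^[n + 1] ((X - C c) * Q)).eval c = (n + 1) * (derivative^[n] Q).eval c := by
  simp [iterate_derivative_X_sub_C_mul]

variable {K ι : Type*} [Field K] [DecidableEq ι] {b : ι → K} {z : K}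

theorem eval_derivative_prod_X_sub_C (s : Finset ι) (hz : ∀ j ∈ s, z ≠ b j) :
    (derivative (∏ j ∈ s, (X - C (b j)))).eval z =
      (∏ j ∈ s, (X - C (b j))).eval z * ∑ j ∈ s, 1 / (z - b j) := by
  induction s using Finset.induction_on with
  | empty => simp
  | insert i s hi ih =>
    have hzi : z - b i ≠ 0 := sub_ne_zero.mpr (hz i (mem_insert_self i s))
    rw [prod_insert hi, sum_insert hi, derivative_mul, derivative_X_sub_C, one_mul]
    simp only [eval_add, eval_mul, eval_sub, eval_X, eval_C,
      ih fun j hj => hz j (mem_insert_of_mem hj)]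
    field_simp

theorem eval_derivative_derivative_prod_X_sub_C (s : Finset ι) (hz : ∀ j ∈ s, z ≠ b j) :
    (derivative (derivative (∏ j ∈ s, (X - C (b j))))).eval z =
      (∏ j ∈ s, (X - C (b j))).eval z *
        ((∑ j ∈ s, 1 / (z - b j)) ^ 2 - ∑ j ∈ s, 1 / (z - b j) ^ 2) := by
  induction s using Finset.induction_on with
  | empty => simp
  | insert i s hi ih =>
    have hz' : ∀ j ∈ s, z ≠ b j := fun j hj => hz j (mem_insert_of_mem hj)
    have hzi : z - b i ≠ 0 := sub_ne_zero.mpr (hz i (mem_insert_self i s))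
    rw [prod_insert hi, sum_insert hi, sum_insert hi, derivative_mul, derivative_X_sub_C, one_mul,
      derivative_add, derivative_mul, derivative_X_sub_C, one_mul]
    simp only [eval_add, eval_mul, eval_sub, eval_X, eval_C, ih hz',
      eval_derivative_prod_X_sub_C s hz']
    field_simp
    ring

end Polynomial

/-- `p'''(a_k) = 3 p'(a_k) (L₁² − L₂)` where `L_m = ∑_{j≠k} 1/(a_k − a_j)^m`. -/
theorem third_deriv_at_root (M : ℕ) (a : Fin M → ℂ) (ha : Function.Injective a)
    (p : ℂ → ℂ) (hp : ∀ z, p z = ∏ j, (z - a j)) (k : Fin M)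
    (L : ℕ → ℂ) (hL : ∀ m, L m = ∑ j ∈ Finset.univ.erase k, 1 / (a k - a j) ^ m) :
    iteratedDeriv 3 p (a k) = 3 * deriv p (a k) * ((L 1) ^ 2 - L 2) := by
  set Q : ℂ[X] := ∏ j ∈ univ.erase k, (X - C (a j))
  have hpQ : p = fun z => ((X - C (a k)) * Q).eval z := by
    funext z
    rw [hp, ← mul_prod_erase univ _ (mem_univ k)]
    simp [Q, eval_prod]
  have hak : ∀ j ∈ univ.erase k, a k ≠ a j := fun j hj => ha.ne (ne_of_mem_erase hj).symm
  have hp1 : deriv p (a k) = Q.eval (a k) := by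
    rw [hpQ, Polynomial.deriv, ← Function.iterate_one derivative,
      eval_iterate_derivative_X_sub_C_mul_self (a k) Q 0]
    simp
  have hp3 : iteratedDeriv 3 p (a k) = 3 * (derivative (derivative Q)).eval (a k) := by
    rw [hpQ, iteratedDeriv_eval]
    exact (eval_iterate_derivative_X_sub_C_mul_self (a k) Q 2).trans (by norm_num)
  rw [hp3, hp1, eval_derivative_derivative_prod_X_sub_C _ hak, hL, hL]
  simp only [pow_one]
  ring
end

section
/- Let p be a monic complex polynomial of degree M with pairwise distinct roots a_1,…,a_M. Then p''''(a_k) = 4·p'(a_k)·(2L_3 − 3L_1 L_2 + L_1³), where L_m = ∑_{j≠k} 1/(a_k − a_j)^m. -/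
/-!
Write `p = (X - a_k) Q` with `Q = ∏_{j ≠ k} (X - a_j)`. By Leibniz' rule
`p^{(n+1)}(a_k) = (n + 1) Q^{(n)}(a_k)`, so `p'(a_k) = Q(a_k)` and `p''''(a_k) = 4 Q'''(a_k)`.
Building `Q` up one linear factor at a time, the same rule shows that `Q'/Q`, `Q''/Q` and
`Q'''/Q` at `a_k` are `L₁`, `L₁² - L₂` and `L₁³ - 3 L₁ L₂ + 2 L₃`.
-/

open Polynomial Finset

theorem Polynomial.iteratedDeriv_eval_s4 {𝕜 : Type*} [NontriviallyNormedField 𝕜] (P : 𝕜[X])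
    (n : ℕ) : iteratedDeriv n (fun x => P.eval x) = fun x => (derivative^[n] P).eval x := by
  induction n with
  | zero => simp
  | succ n ih =>
    funext x
    rw [iteratedDeriv_succ, ih, Function.iterate_succ_apply', Polynomial.deriv]

section CommRing

variable {R : Type*} [CommRing R]

theorem Polynomial.iterate_derivative_X_sub_C_mul_s4 (c : R) (Q : R[X]) (n : ℕ) :
    derivative^[n + 1] ((X - C c) * Q)
      = (n + 1 : R[X]) * derivative^[n] Q + (X - C c) * derivative^[n + 1] Q := by
  induction n with
  | zero => simp [derivative_mul]
  | succ n ih =>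
    rw [Function.iterate_succ_apply', ih]
    simp only [Function.iterate_succ_apply', derivative_add, derivative_mul, derivative_natCast,
      derivative_one, add_zero, zero_mul, zero_add, derivative_sub, derivative_X, derivative_C,
      sub_zero, one_mul, Nat.cast_add, Nat.cast_one]
    ring

theorem Polynomial.eval_iterate_derivative_X_sub_C_mul (x c : R) (Q : R[X]) (n : ℕ) :
    (derivative^[n + 1] ((X - C c) * Q)).eval x
      = (n + 1) * (derivative^[n] Q).eval x + (x - c) * (derivative^[n + 1] Q).eval x := by
  simp [iterate_derivative_X_sub_C_mul_s4]

theorem Polynomial.eval_iterate_derivative_X_sub_C_mul_self_s4 (c : R) (Q : R[X]) (n : ℕ) :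
    (derivative^[n + 1] ((X - C c) * Q)).eval c = (n + 1) * (derivative^[n] Q).eval c := by
  rw [eval_iterate_derivative_X_sub_C_mul, sub_self, zero_mul, add_zero]

end CommRing

section Field

variable {K ι : Type*} [Field K] {x : K} {b : ι → K}

theorem eval_prod_X_sub_C (s : Finset ι) :
    (∏ j ∈ s, (X - C (b j))).eval x = ∏ j ∈ s, (x - b j) := by
  simp [eval_prod]

theorem eval_iterate_derivative_one_prod_X_sub_C (s : Finset ι) (hb : ∀ j ∈ s, x ≠ b j) :
    (derivative^[1] (∏ j ∈ s, (X - C (b j)))).eval x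
      = (∏ j ∈ s, (x - b j)) * ∑ j ∈ s, 1 / (x - b j) := by
  induction s using Finset.cons_induction with
  | empty => simp
  | cons c s hc ih =>
    have hxc : x - b c ≠ 0 := sub_ne_zero.mpr (hb c (mem_cons_self c s))
    rw [prod_cons, eval_iterate_derivative_X_sub_C_mul, ih fun j hj => hb j (mem_cons_of_mem hj),
      Function.iterate_zero_apply, eval_prod_X_sub_C, prod_cons, sum_cons]
    field_simp
    ring

theorem eval_iterate_derivative_two_prod_X_sub_C (s : Finset ι) (hb : ∀ j ∈ s, x ≠ b j) :
    (derivative^[2] (∏ j ∈ s, (X - C (b j)))).eval x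
      = (∏ j ∈ s, (x - b j)) *
          ((∑ j ∈ s, 1 / (x - b j)) ^ 2 - ∑ j ∈ s, 1 / (x - b j) ^ 2) := by
  induction s using Finset.cons_induction with
  | empty => simp
  | cons c s hc ih =>
    have hb' : ∀ j ∈ s, x ≠ b j := fun j hj => hb j (mem_cons_of_mem hj)
    have hxc : x - b c ≠ 0 := sub_ne_zero.mpr (hb c (mem_cons_self c s))
    rw [prod_cons, eval_iterate_derivative_X_sub_C_mul, ih hb',
      eval_iterate_derivative_one_prod_X_sub_C s hb', prod_cons, sum_cons, sum_cons]
    field_simp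
    ring

theorem eval_iterate_derivative_three_prod_X_sub_C (s : Finset ι) (hb : ∀ j ∈ s, x ≠ b j) :
    (derivative^[3] (∏ j ∈ s, (X - C (b j)))).eval x
      = (∏ j ∈ s, (x - b j)) * ((∑ j ∈ s, 1 / (x - b j)) ^ 3
          - 3 * (∑ j ∈ s, 1 / (x - b j)) * (∑ j ∈ s, 1 / (x - b j) ^ 2)
          + 2 * ∑ j ∈ s, 1 / (x - b j) ^ 3) := by
  induction s using Finset.cons_induction with
  | empty => simp
  | cons c s hc ih =>
    have hb' : ∀ j ∈ s, x ≠ b j := fun j hj => hb j (mem_cons_of_mem hj)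
    have hxc : x - b c ≠ 0 := sub_ne_zero.mpr (hb c (mem_cons_self c s))
    rw [prod_cons, eval_iterate_derivative_X_sub_C_mul, ih hb',
      eval_iterate_derivative_two_prod_X_sub_C s hb', prod_cons, sum_cons, sum_cons, sum_cons]
    field_simp
    ring

end Field

/-- `p''''(a_k) = 4 p'(a_k) (2L₃ − 3L₁L₂ + L₁³)` where `L_m = ∑_{j≠k} 1/(a_k − a_j)^m`. -/
theorem fourth_deriv_at_root (M : ℕ) (a : Fin M → ℂ) (ha : Function.Injective a)
    (p : ℂ → ℂ) (hp : ∀ z, p z = ∏ j, (z - a j)) (k : Fin M)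
    (L : ℕ → ℂ) (hL : ∀ m, L m = ∑ j ∈ Finset.univ.erase k, 1 / (a k - a j) ^ m) :
    iteratedDeriv 4 p (a k)
      = 4 * deriv p (a k) * (2 * L 3 - 3 * L 1 * L 2 + (L 1) ^ 3) := by
  set Q : ℂ[X] := ∏ j ∈ univ.erase k, (X - C (a j))
  have hfactor : p = fun z => ((X - C (a k)) * Q).eval z := by
    funext z
    rw [hp, ← mul_prod_erase univ _ (mem_univ k), eval_mul, eval_prod_X_sub_C]
    simp
  have hroots : ∀ j ∈ univ.erase k, a k ≠ a j := fun j hj => ha.ne (ne_of_mem_erase hj).symm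
  have hderiv : deriv p (a k) = ∏ j ∈ univ.erase k, (a k - a j) := by
    rw [hfactor, Polynomial.deriv, ← Function.iterate_one derivative,
      eval_iterate_derivative_X_sub_C_mul_self_s4]
    simp [Q, eval_prod_X_sub_C]
  have hderiv4 : iteratedDeriv 4 p (a k) = 4 * (derivative^[3] Q).eval (a k) := by
    rw [hfactor, iteratedDeriv_eval_s4]
    convert eval_iterate_derivative_X_sub_C_mul_self_s4 (a k) Q 3 using 1
    norm_num
  rw [hderiv4, hderiv, eval_iterate_derivative_three_prod_X_sub_C _ hroots, hL, hL, hL]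
  simp only [pow_one]
  ring
end

section
/- If y(t) = d/dt log(℘'(t − t₀; g₂, g₃)) = ℘''(t−t₀)/℘'(t−t₀), where ℘ is the Weierstrass elliptic function, then y satisfies the Chazy-VII equation y_ttt + y·y_tt + 2y_t² − 2y²·y_t = 0. -/
/-!
Write `p = ℘`, `a = ℘'`, so that `y = a'/a`. Differentiating the cubic gives
`℘'' = 6℘² − g₂/2`, i.e. `a' = a y`, and then `y` satisfies the Riccati equation
`y' = 12p − y²`. Differentiating twice more, `y'' = 12a − 2yy'` and
`y''' = 12ay − 2y'² − 2yy''`; substituting these, the Chazy-VII expression vanishes identically.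
-/

open Filter Topology

section

variable {𝕜 : Type*} [NontriviallyNormedField 𝕜]

theorem hasDerivAt_deriv_of_weierstrass [NeZero (2 : 𝕜)] {P : 𝕜 → 𝕜} {g₂ g₃ z : 𝕜}
    (hP' : DifferentiableAt 𝕜 (deriv P) z)
    (hode : (fun w => deriv P w ^ 2) =ᶠ[𝓝 z] fun w => 4 * P w ^ 3 - g₂ * P w - g₃)
    (hne : deriv P z ≠ 0) :
    HasDerivAt (deriv P) (6 * P z ^ 2 - g₂ / 2) z := by
  have hP : HasDerivAt P (deriv P z) z := (differentiableAt_of_deriv_ne_zero hne).hasDerivAt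
  have hsq : HasDerivAt (fun w => deriv P w ^ 2) (2 * deriv P z * deriv (deriv P) z) z :=
    (hP'.hasDerivAt.pow 2).congr_deriv (by ring)
  have hcubic : HasDerivAt (fun w => 4 * P w ^ 3 - g₂ * P w - g₃)
      (2 * deriv P z * (6 * P z ^ 2 - g₂ / 2)) z :=
    (((hP.pow 3).const_mul 4).sub (hP.const_mul g₂)).sub_const g₃ |>.congr_deriv (by
      field_simp; ring)
  have h2 : deriv (deriv P) z = 6 * P z ^ 2 - g₂ / 2 :=
    mul_left_cancel₀ (mul_ne_zero two_ne_zero hne)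
      ((hsq.congr_of_eventuallyEq hode.symm).unique hcubic)
  exact h2 ▸ hP'.hasDerivAt

theorem hasDerivAt_weierstrass_logDeriv {p a : 𝕜 → 𝕜} {c x : 𝕜}
    (hp : HasDerivAt p (a x) x) (ha : HasDerivAt a (6 * p x ^ 2 - c) x) (hne : a x ≠ 0) :
    HasDerivAt (fun u => (6 * p u ^ 2 - c) / a u)
      (12 * p x - ((6 * p x ^ 2 - c) / a x) ^ 2) x :=
  (((hp.pow 2).const_mul 6).sub_const c).div ha hne |>.congr_deriv (by
    simp only [Pi.pow_apply]; field_simp; ring)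

theorem chazyVII_of_riccati {V : Set 𝕜} (hV : IsOpen V) {y p a : 𝕜 → 𝕜}
    (hy : ∀ s ∈ V, HasDerivAt y (12 * p s - y s ^ 2) s)
    (hp : ∀ s ∈ V, HasDerivAt p (a s) s)
    (ha : ∀ s ∈ V, HasDerivAt a (a s * y s) s) {t : 𝕜} (ht : t ∈ V) :
    iteratedDeriv 3 y t + y t * iteratedDeriv 2 y t
      + 2 * deriv y t ^ 2 - 2 * y t ^ 2 * deriv y t = 0 := by
  have hy₂ : ∀ s ∈ V, HasDerivAt (deriv y) (12 * a s - 2 * y s * deriv y s) s := by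
    intro s hs
    refine (((hp s hs).const_mul 12).sub ((hy s hs).pow 2)).congr_of_eventuallyEq ?_
      |>.congr_deriv (by rw [(hy s hs).deriv]; ring)
    filter_upwards [hV.mem_nhds hs] with u hu using (hy u hu).deriv
  have hy₃ : HasDerivAt (deriv (deriv y))
      (12 * (a t * y t) - 2 * (deriv y t * deriv y t + y t * deriv (deriv y) t)) t := by
    refine (((ha t ht).const_mul 12).sub
      (((hy t ht).differentiableAt.hasDerivAt.const_mul 2).mul
        (hy₂ t ht).differentiableAt.hasDerivAt)).congr_of_eventuallyEq ?_ |>.congr_deriv (by ring)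
    filter_upwards [hV.mem_nhds ht] with u hu using
      (hy₂ u hu).deriv.trans (by simp only [Pi.sub_apply, Pi.mul_apply])
  simp only [iteratedDeriv_eq_iterate, Function.iterate_succ, Function.comp_apply,
    Function.iterate_zero, id]
  rw [hy₃.deriv, (hy₂ t ht).deriv]
  ring

end

/-- If `P` behaves like the Weierstrass ℘-function on an open set `U`, i.e.
`(P')² = 4P³ − g₂P − g₃` with `P' ≠ 0` and `P` analytic on `U`, then
`y(t) = P''(t−t₀)/P'(t−t₀)` satisfies the Chazy-VII equation
`y''' + y y'' + 2(y')² − 2y² y' = 0`. -/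
theorem chazy_VII_from_weierstrass (g₂ g₃ t₀ : ℂ) (U : Set ℂ) (hU : IsOpen U)
    (P : ℂ → ℂ) (hana : ∀ z ∈ U, AnalyticAt ℂ P z)
    (hode : ∀ z ∈ U, (deriv P z) ^ 2 = 4 * (P z) ^ 3 - g₂ * P z - g₃)
    (hP' : ∀ z ∈ U, deriv P z ≠ 0)
    (y : ℂ → ℂ)
    (hy : ∀ t, y t = iteratedDeriv 2 P (t - t₀) / deriv P (t - t₀)) :
    ∀ t, t - t₀ ∈ U →
      iteratedDeriv 3 y t + y t * iteratedDeriv 2 y t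
        + 2 * (deriv y t) ^ 2 - 2 * (y t) ^ 2 * deriv y t = 0 := by
  have hP'' : ∀ z ∈ U, HasDerivAt (deriv P) (6 * P z ^ 2 - g₂ / 2) z := fun z hz =>
    hasDerivAt_deriv_of_weierstrass (hana z hz).deriv.differentiableAt
      (eventually_of_mem (hU.mem_nhds hz) hode) (hP' z hz)
  intro t ht
  set V := (· - t₀) ⁻¹' U
  have hV : IsOpen V := hU.preimage (continuous_sub_right t₀)
  have hp : ∀ s ∈ V, HasDerivAt (fun s => P (s - t₀)) (deriv P (s - t₀)) s := fun s hs =>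
    (differentiableAt_of_deriv_ne_zero (hP' _ hs)).hasDerivAt.comp_sub_const s t₀
  have ha : ∀ s ∈ V,
      HasDerivAt (fun s => deriv P (s - t₀)) (6 * P (s - t₀) ^ 2 - g₂ / 2) s :=
    fun s hs => (hP'' _ hs).comp_sub_const s t₀
  have hy_eq : ∀ s ∈ V, y s = (6 * P (s - t₀) ^ 2 - g₂ / 2) / deriv P (s - t₀) :=
    fun s hs => by rw [hy, iteratedDeriv_succ, iteratedDeriv_one, (hP'' _ hs).deriv]
  refine chazyVII_of_riccati hV (fun s hs => ?_) hp (fun s hs => ?_) ht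
  · rw [hy_eq s hs]
    exact (hasDerivAt_weierstrass_logDeriv (p := fun s => P (s - t₀)) (hp s hs) (ha s hs)
      (hP' _ hs)).congr_of_eventuallyEq (eventually_of_mem (hV.mem_nhds hs) hy_eq)
  · rw [hy_eq s hs, mul_div_cancel₀ _ (hP' _ hs)]
    exact ha s hs
end
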